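/- Over the local ring ℂ[x,y]_{(x,y)}, let Q be the cokernel of the map 𝒪⁴ → 𝒪² given by the matrix P = [[x,y,0,0],[0,0,x,y]]. Then Q ≅ (ℂ[x,y]/(x,y))² has length 2 as an 𝒪-module, and for any deformation given by the matrix P̃ = [[x+z₁, y+z₂, z₃, z₄],[z₅, z₆, x+z₇, y+z₈]] with parameters z_i, the generators q₁, q₂ of the cokernel satisfy the syzygies obtained by eliminating x, y: specifically the relations (z₃z₆−z₄z₅)q₁ + (z₂z₅+z₆z₇−z₁z₆−z₅z₈)q₂ = 0 and (z₁z₄+z₃z₈−z₂z₃−z₄z₇)q₁ + (z₄z₅−z₃z₆)q₂ = 0 hold in the cokernel. -/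

import Mathlib

/-!
The columns of `P` generate `(x, y)𝒪 ⊕ (x, y)𝒪`, so `Q ≅ (𝒪/(x, y)𝒪)²`; since `(x, y)𝒪` is the
maximal ideal of the local ring `𝒪`, the quotient `𝒪/(x, y)𝒪` is a simple module, and `Q` is an
extension of it by itself.
-/

open MvPolynomial Matrix

/-- The maximal ideal `(x, y)` of `ℂ[x,y]` (with `x = X 0`, `y = X 1`). -/
noncomputable def mxy : Ideal (MvPolynomial (Fin 2) ℂ) := Ideal.span {X 0, X 1}

section Syzygies

variable {R M : Type*} [CommRing R] [AddCommGroup M] [Module R M]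
  {x y z₁ z₂ z₃ z₄ z₅ z₆ z₇ z₈ : R} {q₁ q₂ : M}

-- Each combination is `x • (y • qᵢ) - y • (x • qᵢ) = 0` with the relations substituted.
theorem deformed_relations_syzygy_left
    (h₁ : x • q₁ = -(z₁ • q₁) - z₅ • q₂) (h₂ : y • q₁ = -(z₂ • q₁) - z₆ • q₂)
    (h₃ : x • q₂ = -(z₃ • q₁) - z₇ • q₂) (h₄ : y • q₂ = -(z₄ • q₁) - z₈ • q₂) :
    (z₃ * z₆ - z₄ * z₅) • q₁ + (z₂ * z₅ + z₆ * z₇ - z₁ * z₆ - z₅ * z₈) • q₂ = 0 := by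
  linear_combination (norm := module) (y + z₂) • h₁ - (x + z₁) • h₂ + z₆ • h₃ - z₅ • h₄

theorem deformed_relations_syzygy_right
    (h₁ : x • q₁ = -(z₁ • q₁) - z₅ • q₂) (h₂ : y • q₁ = -(z₂ • q₁) - z₆ • q₂)
    (h₃ : x • q₂ = -(z₃ • q₁) - z₇ • q₂) (h₄ : y • q₂ = -(z₄ • q₁) - z₈ • q₂) :
    (z₁ * z₄ + z₃ * z₈ - z₂ * z₃ - z₄ * z₇) • q₁ + (z₄ * z₅ - z₃ * z₆) • q₂ = 0 := by
  linear_combination (norm := module) z₄ • h₁ - z₃ • h₂ + (y + z₈) • h₃ - (x + z₇) • h₄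

end Syzygies

theorem range_mulVecLin_diagonal_pair {O : Type*} [CommRing O] (x y : O) :
    LinearMap.range (!![x, y, 0, 0; 0, 0, x, y]).mulVecLin =
      Submodule.pi Set.univ (fun _ : Fin 2 => (Ideal.span {x, y} : Submodule O O)) := by
  ext w
  simp only [LinearMap.mem_range, Matrix.mulVecLin_apply, Submodule.mem_pi, Set.mem_univ,
    true_implies, Fin.forall_fin_two, Ideal.mem_span_pair]
  constructor
  · rintro ⟨v, rfl⟩
    exact ⟨⟨v 0, v 1, by simp [mulVec, dotProduct, Fin.sum_univ_four, mul_comm]⟩,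
      ⟨v 2, v 3, by simp [mulVec, dotProduct, Fin.sum_univ_four, mul_comm]⟩⟩
  · rintro ⟨⟨a, b, hab⟩, ⟨c, d, hcd⟩⟩
    refine ⟨![a, b, c, d], funext fun i => ?_⟩
    fin_cases i
    · simpa [mulVec, dotProduct, Fin.sum_univ_four, mul_comm] using hab
    · simpa [mulVec, dotProduct, Fin.sum_univ_four, mul_comm] using hcd

theorem exists_isSimpleModule_submodule_and_quotient_of_equiv_prod {R M S : Type*} [Ring R]
    [AddCommGroup M] [Module R M] [AddCommGroup S] [Module R S] [IsSimpleModule R S]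
    (e : M ≃ₗ[R] S × S) :
    ∃ N : Submodule R M, IsSimpleModule R N ∧ IsSimpleModule R (M ⧸ N) := by
  let f : M →ₗ[R] S := LinearMap.snd R S S ∘ₗ e.toLinearMap
  have hf : Function.Surjective f := (LinearMap.snd_surjective (R := R)).comp e.surjective
  have hker : (LinearMap.ker f).map e.toLinearMap = LinearMap.range (LinearMap.inl R S S) := by
    rw [LinearMap.ker_comp, Submodule.map_comap_eq_of_surjective e.surjective, LinearMap.ker_snd]
  refine ⟨LinearMap.ker f, ?_, ?_⟩
  · exact IsSimpleModule.congr ((e.ofSubmodules _ _ hker).trans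
      (LinearEquiv.ofInjective _ LinearMap.inl_injective).symm)
  · exact IsSimpleModule.congr (f.quotKerEquivOfSurjective hf)

/-- Part (a): over the local ring `𝒪 = ℂ[x,y]_{(x,y)}`, the cokernel `Q` of the map
`𝒪⁴ → 𝒪²` given by `P = [[x,y,0,0],[0,0,x,y]]` is isomorphic to `(𝒪/(x,y)𝒪)² ≅
(ℂ[x,y]/(x,y))²` and has length 2 (it has a simple submodule with simple quotient).
Part (b): in the cokernel of any deformed matrix
`P̃ = [[x+z₁, y+z₂, z₃, z₄],[z₅, z₆, x+z₇, y+z₈]]`, i.e. for any module `M` with elements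
`q₁, q₂` satisfying the four column relations, the two syzygies obtained by eliminating
`x` and `y` hold. -/
theorem cokernel_length_two_and_syzygies (hm : mxy.IsPrime) :
    (let O := Localization (@Ideal.primeCompl _ _ mxy hm)
     let x : O := algebraMap (MvPolynomial (Fin 2) ℂ) O (X 0)
     let y : O := algebraMap (MvPolynomial (Fin 2) ℂ) O (X 1)
     let P : Matrix (Fin 2) (Fin 4) O := !![x, y, 0, 0; 0, 0, x, y]
     let Q := (Fin 2 → O) ⧸ LinearMap.range P.mulVecLin
     Nonempty
        (Q ≃ₗ[O] (Fin 2 → O ⧸ mxy.map (algebraMap (MvPolynomial (Fin 2) ℂ) O))) ∧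
      ∃ N : Submodule O Q, IsSimpleModule O N ∧ IsSimpleModule O (Q ⧸ N)) ∧
    (∀ (R : Type) (_ : CommRing R) (M : Type) (_ : AddCommGroup M) (_ : Module R M)
        (x y z₁ z₂ z₃ z₄ z₅ z₆ z₇ z₈ : R) (q₁ q₂ : M),
      x • q₁ = -(z₁ • q₁) - z₅ • q₂ →
      y • q₁ = -(z₂ • q₁) - z₆ • q₂ →
      x • q₂ = -(z₃ • q₁) - z₇ • q₂ →
      y • q₂ = -(z₄ • q₁) - z₈ • q₂ →
      (z₃ * z₆ - z₄ * z₅) • q₁ + (z₂ * z₅ + z₆ * z₇ - z₁ * z₆ - z₅ * z₈) • q₂ = 0 ∧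
      (z₁ * z₄ + z₃ * z₈ - z₂ * z₃ - z₄ * z₇) • q₁ + (z₄ * z₅ - z₃ * z₆) • q₂ = 0) := by
  refine ⟨?_, fun R _ M _ _ x y z₁ z₂ z₃ z₄ z₅ z₆ z₇ z₈ q₁ q₂ h₁ h₂ h₃ h₄ =>
    ⟨deformed_relations_syzygy_left h₁ h₂ h₃ h₄, deformed_relations_syzygy_right h₁ h₂ h₃ h₄⟩⟩
  intro O x y P Q
  set J : Ideal O := mxy.map (algebraMap (MvPolynomial (Fin 2) ℂ) O)
  have hJ_span : J = Ideal.span {x, y} := by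
    simp only [J, mxy, Ideal.map_span, Set.image_pair]; rfl
  have : IsSimpleModule O (O ⧸ J) := by
    have := hm
    refine isSimpleModule_iff_isCoatom.mpr ?_
    rw [show J = IsLocalRing.maximalIdeal O from Localization.AtPrime.map_eq_maximalIdeal]
    exact (IsLocalRing.maximalIdeal.isMaximal O).out
  let E : Q ≃ₗ[O] (Fin 2 → O ⧸ J) :=
    (Submodule.quotEquivOfEq _ _ (hJ_span ▸ range_mulVecLin_diagonal_pair x y)).trans
      (Submodule.quotientPi fun _ => (J : Submodule O O))
  exact ⟨⟨E⟩, exists_isSimpleModule_submodule_and_quotient_of_equiv_prod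
    (E.trans (LinearEquiv.finTwoArrow O (O ⧸ J)))⟩
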